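/- Let C be a monoidal category with coequalizers in which tensoring on either side preserves coequalizers. Let f : A ⟶ B be a morphism of monoid objects in C; regard B as a (B,A)-bimodule object and as an (A,B)-bimodule object by restricting its regular actions along f, and form the relative tensor product B ⊗_A B (the coequalizer of the two canonical maps (B ⊗ A) ⊗ B ⇉ B ⊗ B given by the right action of A on the first factor and the left action of A on the second factor; Mathlib `Bimod.tensorBimod`). Let m : B ⊗_A B ⟶ B be the canonical morphism of B-bimodule objects induced by the multiplication of B. If m is an isomorphism and A is separable, then B is separable. -/

import Mathlib

/-! A monoid is separable iff it has a central separability element: `e : 𝟙 ⟶ M ⊗ M` with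
`μ e = 1` and `e b = b e` for all `b` (take `e = σ 1`, and conversely `σ b = e b`).
Push such an element `e` of `A` forward to `B ⊗ B`. It still satisfies `μ e = 1` and commutes with
the image of `A`, so `b ⊗ b' ↦ b e b'` descends to `B ⊗_A B`. As `B ⊗_A B ⟶ B` is mono, `1 ⊗ b`
and `b ⊗ 1` agree in `B ⊗_A B`; applying the descended map to them gives `e b = b e`. -/

open CategoryTheory MonoidalCategory Limits
open scoped MonObj

/-- A monoid object `A` in a monoidal category is *separable* if its multiplication
`μ : A ⊗ A ⟶ A` admits a section `σ : A ⟶ A ⊗ A` which is a morphism of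
`A`-bimodule objects from `A` to the free bimodule `A ⊗ A`. -/
def Mon_.IsSeparable {C : Type*} [Category C] [MonoidalCategory C] (A : Mon C) : Prop :=
  ∃ σ : A.X ⟶ A.X ⊗ A.X,
    σ ≫ μ[A.X] = 𝟙 A.X ∧
    μ[A.X] ≫ σ = (A.X ◁ σ) ≫ (α_ A.X A.X A.X).inv ≫ (μ[A.X] ▷ A.X) ∧
    μ[A.X] ≫ σ = (σ ▷ A.X) ≫ (α_ A.X A.X A.X).hom ≫ (A.X ◁ μ[A.X])

variable {C : Type*} [Category C] [MonoidalCategory C]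

/-- Given a morphism of monoid objects `f : A ⟶ B`, the monoid `B` regarded as a
`(B, A)`-bimodule object, via its regular left action and via restricting its regular
right action along `f`. -/
@[simps]
def restrictRightRegular {A B : Mon C} (f : A ⟶ B) : Bimod B A where
  X := B.X
  actLeft := μ[B.X]
  actRight := (B.X ◁ f.hom) ≫ μ[B.X]
  actRight_one := by
    rw [← MonoidalCategory.whiskerLeft_comp_assoc, IsMonHom.one_hom, MonObj.mul_one]
  right_assoc := by
    rw [← MonoidalCategory.whiskerLeft_comp_assoc, IsMonHom.mul_hom,
      MonoidalCategory.whiskerLeft_comp_assoc, MonoidalCategory.tensorHom_def]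
    simp only [comp_whiskerRight, Category.assoc, MonObj.mul_assoc_flip,
      MonoidalCategory.whiskerLeft_comp, associator_inv_naturality_right_assoc,
      associator_inv_naturality_middle_assoc, whisker_exchange_assoc]
  middle_assoc := by
    rw [← whisker_exchange_assoc]
    simp only [MonoidalCategory.whiskerLeft_comp, Category.assoc, MonObj.mul_assoc,
      associator_naturality_right_assoc]

/-- Given a morphism of monoid objects `f : A ⟶ B`, the monoid `B` regarded as an
`(A, B)`-bimodule object, via restricting its regular left action along `f` and via
its regular right action. -/
@[simps]
def restrictLeftRegular {A B : Mon C} (f : A ⟶ B) : Bimod A B where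
  X := B.X
  actLeft := (f.hom ▷ B.X) ≫ μ[B.X]
  actRight := μ[B.X]
  one_actLeft := by
    rw [← comp_whiskerRight_assoc, IsMonHom.one_hom, MonObj.one_mul]
  left_assoc := by
    rw [← comp_whiskerRight_assoc, IsMonHom.mul_hom, comp_whiskerRight_assoc, tensorHom_def']
    simp only [comp_whiskerRight, Category.assoc, MonObj.mul_assoc,
      MonoidalCategory.whiskerLeft_comp, associator_naturality_left_assoc,
      associator_naturality_middle_assoc, whisker_exchange_assoc]
  middle_assoc := by
    simp only [comp_whiskerRight, Category.assoc, MonObj.mul_assoc,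
      associator_naturality_left_assoc, ← whisker_exchange_assoc]

/-- The multiplication of `B` coequalizes the two maps whose coequalizer is `B ⊗_A B`. -/
theorem mul_coeq {A B : Mon C} (f : A ⟶ B) :
    ((restrictRightRegular f).actRight ▷ (restrictLeftRegular f).X) ≫ μ[B.X] =
      ((α_ _ _ _).hom ≫
        ((restrictRightRegular f).X ◁ (restrictLeftRegular f).actLeft)) ≫ μ[B.X] := by
  change ((B.X ◁ f.hom ≫ μ[B.X]) ▷ B.X) ≫ μ[B.X] =
    ((α_ B.X A.X B.X).hom ≫ (B.X ◁ (f.hom ▷ B.X ≫ μ[B.X]))) ≫ μ[B.X]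
  simp only [restrictRightRegular_actRight, restrictLeftRegular_X, restrictRightRegular_X,
    restrictLeftRegular_actLeft, comp_whiskerRight, Category.assoc, MonObj.mul_assoc,
    MonoidalCategory.whiskerLeft_comp, associator_naturality_middle_assoc]

namespace MonObj

variable {M : C} [MonObj M] (e : 𝟙_ C ⟶ M ⊗ M)

/-- Writing `e = e₁ ⊗ e₂`, this is `b ↦ e₁ ⊗ e₂ b`. -/
def eltMul : M ⟶ M ⊗ M :=
  (λ_ M).inv ≫ (e ▷ M) ≫ (α_ _ _ _).hom ≫ (M ◁ μ)

/-- Writing `e = e₁ ⊗ e₂`, this is `b ↦ b e₁ ⊗ e₂`. -/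
def mulElt : M ⟶ M ⊗ M :=
  (ρ_ M).inv ≫ (M ◁ e) ≫ (α_ _ _ _).inv ≫ (μ ▷ M)

/-- Writing `e = e₁ ⊗ e₂`, this is `b ⊗ b' ↦ b e₁ ⊗ e₂ b'`. -/
def sandwich : M ⊗ M ⟶ M ⊗ M :=
  (M ◁ eltMul e) ≫ (α_ _ _ _).inv ≫ (μ ▷ M)

theorem sandwich_eq_mulElt_whiskerRight :
    sandwich e = (mulElt e ▷ M) ≫ (α_ _ _ _).hom ≫ (M ◁ μ) := by
  dsimp only [sandwich, eltMul, mulElt]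
  simp only [MonoidalCategory.whiskerLeft_comp, comp_whiskerRight, Category.assoc]
  slice_lhs 4 5 => rw [associator_inv_naturality_right]
  slice_lhs 5 6 => rw [whisker_exchange]
  slice_rhs 4 5 => rw [associator_naturality_left]
  monoidal

theorem mul_comp_eltMul : μ ≫ eltMul e = (eltMul e ▷ M) ≫ (α_ _ _ _).hom ≫ (M ◁ μ) := by
  dsimp only [eltMul]
  simp only [comp_whiskerRight, Category.assoc]
  slice_rhs 4 5 => rw [associator_naturality_middle]
  slice_rhs 5 6 => rw [← MonoidalCategory.whiskerLeft_comp, MonObj.mul_assoc,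
    MonoidalCategory.whiskerLeft_comp, MonoidalCategory.whiskerLeft_comp]
  slice_lhs 1 2 => rw [leftUnitor_inv_naturality]
  slice_lhs 2 3 => rw [whisker_exchange]
  slice_lhs 3 4 => rw [associator_naturality_right]
  monoidal

theorem mul_comp_mulElt : μ ≫ mulElt e = (M ◁ mulElt e) ≫ (α_ _ _ _).inv ≫ (μ ▷ M) := by
  dsimp only [mulElt]
  simp only [MonoidalCategory.whiskerLeft_comp, Category.assoc]
  slice_rhs 4 5 => rw [associator_inv_naturality_middle]
  slice_rhs 5 6 => rw [← comp_whiskerRight, MonObj.mul_assoc_flip,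
    comp_whiskerRight, comp_whiskerRight]
  slice_lhs 1 2 => rw [rightUnitor_inv_naturality]
  slice_lhs 2 3 => rw [← whisker_exchange]
  slice_lhs 3 4 => rw [associator_inv_naturality_left]
  monoidal

theorem eltMul_comp_mul (he : e ≫ μ = η) : eltMul e ≫ μ = 𝟙 M := by
  dsimp only [eltMul]
  slice_lhs 3 5 => rw [← MonObj.mul_assoc]
  slice_lhs 2 3 => rw [← comp_whiskerRight, he]
  rw [MonObj.one_mul, Iso.inv_hom_id]

theorem unit_whiskerRight_comp_sandwich :
    (λ_ M).inv ≫ (η ▷ M) ≫ sandwich e = eltMul e := by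
  dsimp only [sandwich]
  slice_lhs 2 3 => rw [← whisker_exchange]
  slice_lhs 3 4 => rw [associator_inv_naturality_left]
  slice_lhs 4 5 => rw [← comp_whiskerRight, MonObj.one_mul]
  slice_lhs 1 2 => rw [← leftUnitor_inv_naturality]
  monoidal

theorem whiskerLeft_unit_comp_sandwich :
    (ρ_ M).inv ≫ (M ◁ η) ≫ sandwich e = mulElt e := by
  rw [sandwich_eq_mulElt_whiskerRight]
  slice_lhs 2 3 => rw [whisker_exchange]
  slice_lhs 3 4 => rw [associator_naturality_right]
  slice_lhs 4 5 => rw [← MonoidalCategory.whiskerLeft_comp, MonObj.mul_one]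
  slice_lhs 1 2 => rw [← rightUnitor_inv_naturality]
  monoidal

theorem eq_eltMul_of_mul_comp (σ : M ⟶ M ⊗ M)
    (hσ : μ ≫ σ = (σ ▷ M) ≫ (α_ M M M).hom ≫ (M ◁ μ)) : σ = eltMul (η ≫ σ) := by
  conv_lhs => rw [← Category.id_comp σ, ← Iso.inv_hom_id (λ_ M), Category.assoc,
    ← MonObj.one_mul M, Category.assoc, hσ]
  dsimp only [eltMul]
  rw [comp_whiskerRight_assoc]

theorem eq_mulElt_of_mul_comp (σ : M ⟶ M ⊗ M)
    (hσ : μ ≫ σ = (M ◁ σ) ≫ (α_ M M M).inv ≫ (μ ▷ M)) : σ = mulElt (η ≫ σ) := by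
  conv_lhs => rw [← Category.id_comp σ, ← Iso.inv_hom_id (ρ_ M), Category.assoc,
    ← MonObj.mul_one M, Category.assoc, hσ]
  dsimp only [mulElt]
  rw [MonoidalCategory.whiskerLeft_comp_assoc]

theorem sandwich_balanced {N : C} (g : N ⟶ M) (hg : g ≫ eltMul e = g ≫ mulElt e) :
    (((M ◁ g) ≫ μ) ▷ M) ≫ sandwich e = ((α_ M N M).hom ≫ (M ◁ ((g ▷ M) ≫ μ))) ≫ sandwich e := by
  have hgl : ((g ▷ M) ≫ μ) ≫ eltMul e =
      (N ◁ eltMul e) ≫ (g ▷ (M ⊗ M)) ≫ (α_ _ _ _).inv ≫ (μ ▷ M) := by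
    rw [Category.assoc, mul_comp_eltMul]
    slice_lhs 1 2 => rw [← comp_whiskerRight, hg]
    simp only [comp_whiskerRight, Category.assoc]
    rw [← sandwich_eq_mulElt_whiskerRight]
    dsimp only [sandwich]
    rw [whisker_exchange_assoc]
  dsimp only [sandwich]
  slice_lhs 1 2 => rw [← whisker_exchange]
  slice_rhs 2 3 => rw [← MonoidalCategory.whiskerLeft_comp, hgl]
  simp only [MonoidalCategory.whiskerLeft_comp, comp_whiskerRight, Category.assoc]
  slice_lhs 3 4 => rw [associator_inv_naturality_left]
  slice_rhs 5 6 => rw [associator_inv_naturality_middle]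
  slice_rhs 6 7 => rw [← comp_whiskerRight, MonObj.mul_assoc_flip,
    comp_whiskerRight, comp_whiskerRight]
  monoidal

theorem eltMul_eq_mulElt_of_fac {Q : C} (π : M ⊗ M ⟶ Q) (m : Q ⟶ M) [Mono m] (hπm : π ≫ m = μ)
    (φ : Q ⟶ M ⊗ M) (hπφ : π ≫ φ = sandwich e) : eltMul e = mulElt e := by
  have hπ : (λ_ M).inv ≫ (η ▷ M) ≫ π = (ρ_ M).inv ≫ (M ◁ η) ≫ π := by
    rw [← cancel_mono m]
    simp only [Category.assoc, hπm, MonObj.one_mul, MonObj.mul_one, Iso.inv_hom_id]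
  calc eltMul e = (λ_ M).inv ≫ (η ▷ M) ≫ π ≫ φ := by
        rw [hπφ, unit_whiskerRight_comp_sandwich]
    _ = (ρ_ M).inv ≫ (M ◁ η) ≫ π ≫ φ := by rw [reassoc_of% hπ]
    _ = mulElt e := by rw [hπφ, whiskerLeft_unit_comp_sandwich]

variable {N : C} [MonObj N] (f : M ⟶ N) [IsMonHom f]

theorem eltMul_comp_tensorHom : eltMul e ≫ (f ⊗ₘ f) = f ≫ eltMul (e ≫ (f ⊗ₘ f)) := by
  dsimp only [eltMul]
  rw [MonoidalCategory.tensorHom_def]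
  simp only [comp_whiskerRight, Category.assoc]
  slice_lhs 4 5 => rw [whisker_exchange]
  slice_lhs 5 6 => rw [← MonoidalCategory.whiskerLeft_comp, IsMonHom.mul_hom,
    MonoidalCategory.tensorHom_def]
  simp only [MonoidalCategory.whiskerLeft_comp, Category.assoc]
  slice_lhs 3 4 => rw [← associator_naturality_left]
  slice_lhs 4 5 => rw [← associator_naturality_middle]
  slice_lhs 5 6 => rw [← associator_naturality_right]
  slice_rhs 1 2 => rw [leftUnitor_inv_naturality]
  slice_rhs 2 3 => rw [whisker_exchange]
  slice_rhs 3 4 => rw [whisker_exchange]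
  slice_rhs 4 5 => rw [whisker_exchange]
  monoidal

theorem mulElt_comp_tensorHom : mulElt e ≫ (f ⊗ₘ f) = f ≫ mulElt (e ≫ (f ⊗ₘ f)) := by
  dsimp only [mulElt]
  rw [tensorHom_def']
  simp only [MonoidalCategory.whiskerLeft_comp, Category.assoc]
  slice_lhs 4 5 => rw [← whisker_exchange]
  slice_lhs 5 6 => rw [← comp_whiskerRight, IsMonHom.mul_hom, tensorHom_def']
  simp only [comp_whiskerRight, Category.assoc]
  slice_lhs 3 4 => rw [← associator_inv_naturality_right]
  slice_lhs 4 5 => rw [← associator_inv_naturality_middle]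
  slice_lhs 5 6 => rw [← associator_inv_naturality_left]
  slice_rhs 1 2 => rw [rightUnitor_inv_naturality]
  slice_rhs 2 3 => rw [← whisker_exchange]
  slice_rhs 3 4 => rw [← whisker_exchange]
  slice_rhs 4 5 => rw [← whisker_exchange]
  monoidal

end MonObj

open MonObj

theorem Mon_.isSeparable_iff_exists_eltMul_eq_mulElt (A : Mon C) :
    Mon_.IsSeparable A ↔ ∃ e : 𝟙_ C ⟶ A.X ⊗ A.X, e ≫ μ = η ∧ eltMul e = mulElt e := by
  constructor
  · rintro ⟨σ, hσμ, hσl, hσr⟩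
    refine ⟨η ≫ σ, by rw [Category.assoc, hσμ, Category.comp_id], ?_⟩
    rw [← eq_eltMul_of_mul_comp σ hσr, ← eq_mulElt_of_mul_comp σ hσl]
  · rintro ⟨e, he, hlr⟩
    refine ⟨eltMul e, eltMul_comp_mul e he, ?_, mul_comp_eltMul e⟩
    rw [hlr, mul_comp_mulElt]

/-- If `f : A ⟶ B` is a morphism of monoid objects such that the canonical morphism of
`B`-bimodule objects `B ⊗_A B ⟶ B` induced by the multiplication of `B` is an
isomorphism, and `A` is separable, then `B` is separable. -/
theorem Mon_.IsSeparable.of_isIso_desc_mul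
    [HasCoequalizers C]
    [∀ X : C, PreservesColimitsOfSize.{0, 0} (tensorLeft X)]
    [∀ X : C, PreservesColimitsOfSize.{0, 0} (tensorRight X)]
    {A B : Mon C} (f : A ⟶ B)
    (hm : IsIso (coequalizer.desc μ[B.X] (mul_coeq f) :
      ((restrictRightRegular f).tensorBimod (restrictLeftRegular f)).X ⟶ B.X))
    (hA : Mon_.IsSeparable A) : Mon_.IsSeparable B := by
  obtain ⟨e, he, hlr⟩ := (Mon_.isSeparable_iff_exists_eltMul_eq_mulElt A).1 hA
  have hfe : f.hom ≫ eltMul (e ≫ (f.hom ⊗ₘ f.hom)) =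
      f.hom ≫ mulElt (e ≫ (f.hom ⊗ₘ f.hom)) := by
    rw [← eltMul_comp_tensorHom, ← mulElt_comp_tensorHom, hlr]
  refine (Mon_.isSeparable_iff_exists_eltMul_eq_mulElt B).2 ⟨e ≫ (f.hom ⊗ₘ f.hom), ?_, ?_⟩
  · rw [Category.assoc, ← IsMonHom.mul_hom, reassoc_of% he, IsMonHom.one_hom]
  · have : IsIso (coequalizer.desc μ[B.X] (mul_coeq f)) := hm
    exact eltMul_eq_mulElt_of_fac _ _ (coequalizer.desc μ[B.X] (mul_coeq f))
      (coequalizer.π_desc _ _) (coequalizer.desc _ (sandwich_balanced _ f.hom hfe))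
      (coequalizer.π_desc _ _)
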